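/- (Theorem 2.4 of the paper in the case μ = 0, classical Fourier transform.) Fix x ∈ ℝⁿ. The Kriging function κ_q(x), defined by κ_q(x)² := min{ Uᵀ A U − 2 Uᵀ R(x) + ψ(0) : U ∈ ℝ^M, Pᵀ U = S(x) }, has the representation κ_q(x)² = min{ (2π)^{−n} ∫_{ℝⁿ} |Σ_{j=1}^M u_j e^{i⟨x_j,t⟩} − e^{i⟨x,t⟩}|² ψ̂(t) dt : U = (u_1, …, u_M) ∈ ℝ^M, Pᵀ U = S(x) }, where R(x) := (ψ(x − x_1), …, ψ(x − x_M))ᵀ and S(x) := (p_1(x), …, p_Q(x))ᵀ, and both minima are attained. -/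

import Mathlib

/-!
Expanding `|∑ uⱼ e^{i⟨xⱼ,t⟩} - e^{i⟨x,t⟩}|²` and integrating term by term against `ψ̂` gives,
by Fourier inversion, exactly `Uᵀ A U - 2 Uᵀ R(x) + ψ(0)`: the point `x` enters as an extra node
with weight `-1`. So the two problems have the same objective and it suffices to minimise the
quadratic one. Unisolvency makes `P` injective, so the constraint set `Pᵀ U = S` is nonempty.
On the kernel of `Pᵀ` the form `Uᵀ A U` is positive definite by conditional positive
definiteness, hence nondegenerate; for a feasible `U₀`, representing the functional
`V ↦ Vᵀ (R - A U₀)` through it yields a feasible critical point `U` of the objective `f`, and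
`f(U + D) = f(U) + Dᵀ A D ≥ f(U)` for every `D` in that kernel.
-/

open MeasureTheory Matrix

/-- e^{i⟨y,t⟩}, with the Euclidean inner product on ℝⁿ. -/
noncomputable def expI {n : ℕ} (y t : EuclideanSpace ℝ (Fin n)) : ℂ :=
  Complex.exp (Complex.I * ((inner ℝ y t : ℝ) : ℂ))

/-- The constant (2π)^{−n}. -/
noncomputable def c2pin (n : ℕ) : ℝ := ((2 * Real.pi) ^ n)⁻¹

section Fourier

variable {n : ℕ}

lemma expI_sub (y z t : EuclideanSpace ℝ (Fin n)) :
    expI (y - z) t = expI y t * starRingEnd ℂ (expI z t) := by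
  simp only [expI, ← Complex.exp_conj, ← Complex.exp_add, map_mul, Complex.conj_I,
    Complex.conj_ofReal, inner_sub_left, Complex.ofReal_sub]
  ring_nf

lemma conj_expI (y t : EuclideanSpace ℝ (Fin n)) : starRingEnd ℂ (expI y t) = expI (-y) t := by
  simp [expI, ← Complex.exp_conj, inner_neg_left]

lemma norm_expI (y t : EuclideanSpace ℝ (Fin n)) : ‖expI y t‖ = 1 := by
  simp [expI, Complex.norm_exp]

lemma continuous_expI (y : EuclideanSpace ℝ (Fin n)) : Continuous (expI y) := by
  unfold expI
  fun_prop

lemma MeasureTheory.Integrable.expI_mul {ψhat : EuclideanSpace ℝ (Fin n) → ℝ}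
    (hψhat : Integrable ψhat) (y : EuclideanSpace ℝ (Fin n)) : Integrable fun t => expI y t * (ψhat t : ℂ) :=
  hψhat.ofReal.bdd_mul (continuous_expI y).aestronglyMeasurable
    (.of_forall fun t => (norm_expI y t).le)

lemma ofReal_norm_sum_expI_sq {ι : Type*} [Fintype ι] (w : ι → ℝ)
    (y : ι → EuclideanSpace ℝ (Fin n)) (t : EuclideanSpace ℝ (Fin n)) :
    ((‖∑ i, (w i : ℂ) * expI (y i) t‖ ^ 2 : ℝ) : ℂ) =
      ∑ i, ∑ j, ((w i * w j : ℝ) : ℂ) * expI (y i - y j) t := by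
  rw [Complex.ofReal_pow, ← Complex.mul_conj', map_sum, Finset.sum_mul_sum]
  refine Finset.sum_congr rfl fun i _ => Finset.sum_congr rfl fun j _ => ?_
  rw [map_mul, Complex.conj_ofReal, expI_sub]
  push_cast
  ring

variable {ψ ψhat : EuclideanSpace ℝ (Fin n) → ℝ}

lemma even_of_inversion
    (hinv : ∀ y, (ψ y : ℂ) = (c2pin n : ℂ) * ∫ t, expI y t * (ψhat t : ℂ)) :
    Function.Even ψ := by
  intro y
  apply Complex.ofReal_injective
  rw [← Complex.conj_ofReal, hinv, hinv, map_mul, Complex.conj_ofReal, ← integral_conj]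
  simp only [map_mul, Complex.conj_ofReal, conj_expI, neg_neg]

lemma integral_norm_sum_expI_sq_mul (hψhat : Integrable ψhat)
    (hinv : ∀ y, (ψ y : ℂ) = (c2pin n : ℂ) * ∫ t, expI y t * (ψhat t : ℂ))
    {ι : Type*} [Fintype ι] (w : ι → ℝ) (y : ι → EuclideanSpace ℝ (Fin n)) :
    c2pin n * ∫ t, ‖∑ i, (w i : ℂ) * expI (y i) t‖ ^ 2 * ψhat t =
      ∑ i, ∑ j, w i * w j * ψ (y i - y j) := by
  apply Complex.ofReal_injective
  have hpt : ∀ t, ((‖∑ i, (w i : ℂ) * expI (y i) t‖ ^ 2 * ψhat t : ℝ) : ℂ) =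
      ∑ i, ∑ j, ((w i * w j : ℝ) : ℂ) * (expI (y i - y j) t * ψhat t) := fun t => by
    rw [Complex.ofReal_mul, ofReal_norm_sum_expI_sq, Finset.sum_mul]
    simp only [Finset.sum_mul, mul_assoc]
  rw [Complex.ofReal_mul, ← integral_complex_ofReal, integral_congr_ae (.of_forall hpt),
    integral_finsetSum _ fun i _ => integrable_finsetSum _ fun j _ =>
      (hψhat.expI_mul _).const_mul _]
  push_cast
  simp only [Finset.mul_sum]
  refine Finset.sum_congr rfl fun i _ => ?_
  rw [integral_finsetSum _ fun j _ => (hψhat.expI_mul _).const_mul _, Finset.mul_sum]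
  refine Finset.sum_congr rfl fun j _ => ?_
  rw [integral_const_mul, hinv]
  ring

end Fourier

lemma Matrix.IsSymm.dotProduct_mulVec_comm {ι : Type*} [Fintype ι] {A : Matrix ι ι ℝ}
    (hA : A.IsSymm) (v w : ι → ℝ) : v ⬝ᵥ A *ᵥ w = w ⬝ᵥ A *ᵥ v := by
  rw [dotProduct_mulVec, ← mulVec_transpose, hA.eq, dotProduct_comm]

lemma Matrix.mulVec_transpose_surjective {m k K : Type*} [Fintype m] [Fintype k] [Field K]
    {P : Matrix m k K} (hP : Function.Injective P.mulVec) : Function.Surjective Pᵀ.mulVec := by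
  classical
  have hrank : Pᵀ.rank = Module.finrank K (k → K) := by
    rw [rank_transpose, rank, LinearMap.finrank_range_of_inj (f := P.mulVecLin) hP]
  rw [← coe_mulVecLin, ← LinearMap.range_eq_top]
  exact Submodule.eq_top_of_finrank_eq hrank

lemma Matrix.IsSymm.quadratic_add {ι : Type*} [Fintype ι] {A : Matrix ι ι ℝ} (hA : A.IsSymm)
    (R U D : ι → ℝ) :
    (U + D) ⬝ᵥ A *ᵥ (U + D) - 2 * ((U + D) ⬝ᵥ R) =
      U ⬝ᵥ A *ᵥ U - 2 * (U ⬝ᵥ R) + 2 * (D ⬝ᵥ (A *ᵥ U - R)) + D ⬝ᵥ A *ᵥ D := by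
  simp only [mulVec_add, add_dotProduct, dotProduct_add, dotProduct_sub,
    hA.dotProduct_mulVec_comm U D]
  ring

theorem exists_forall_le_quadratic_of_pos_on_ker {ι F : Type*} [Fintype ι] [AddCommGroup F]
    [Module ℝ F] {A : Matrix ι ι ℝ} (hA : A.IsSymm) (L : (ι → ℝ) →ₗ[ℝ] F)
    (hpos : ∀ W ∈ LinearMap.ker L, W ≠ 0 → 0 < W ⬝ᵥ A *ᵥ W) (R : ι → ℝ) {s : F}
    (hs : s ∈ LinearMap.range L) :
    ∃ U, L U = s ∧ ∀ V, L V = s → U ⬝ᵥ A *ᵥ U - 2 * (U ⬝ᵥ R) ≤ V ⬝ᵥ A *ᵥ V - 2 * (V ⬝ᵥ R) := by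
  classical
  obtain ⟨U₀, rfl⟩ := hs
  set K := LinearMap.ker L
  set B := (Matrix.toBilin' A).restrict K
  have hsep : ∀ W : K, B W W = 0 → W = 0 := fun W hWW => by
    by_contra hW0
    have := hpos W W.2 (by simpa using hW0)
    rw [← toBilin'_apply'] at this
    exact this.ne' hWW
  have hB : B.Nondegenerate := ⟨fun W hW => hsep W (hW W), fun W hW => hsep W (hW W)⟩
  let φ : Module.Dual ℝ K :=
    { toFun := fun V => (V : ι → ℝ) ⬝ᵥ (R - A *ᵥ U₀)
      map_add' := fun V V' => by simp only [Submodule.coe_add, add_dotProduct]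
      map_smul' := fun c V => by
        simp only [Submodule.coe_smul, smul_dotProduct, smul_eq_mul, RingHom.id_apply] }
  set W := (B.toDual hB).symm φ
  have hcrit : ∀ V ∈ K, V ⬝ᵥ (A *ᵥ (U₀ + W) - R) = 0 := fun V hV => by
    have : (W : ι → ℝ) ⬝ᵥ A *ᵥ V = V ⬝ᵥ (R - A *ᵥ U₀) := (toBilin'_apply' A W V).symm.trans
      (LinearMap.BilinForm.apply_toDual_symm_apply (hB := hB) φ ⟨V, hV⟩)
    rw [hA.dotProduct_mulVec_comm] at this
    simp only [mulVec_add, dotProduct_sub, dotProduct_add] at this ⊢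
    linarith
  refine ⟨U₀ + W, by rw [map_add, W.2, add_zero], fun V hV => ?_⟩
  have hVK : V - (U₀ + W) ∈ K := by
    rw [LinearMap.mem_ker, map_sub, hV, map_add, W.2, add_zero, sub_self]
  obtain ⟨D, hD, rfl⟩ : ∃ D ∈ K, V = U₀ + W + D := ⟨_, hVK, by abel⟩
  have hDD : 0 ≤ D ⬝ᵥ A *ᵥ D := by
    rcases eq_or_ne D 0 with rfl | hD0
    · simp
    · exact (hpos D hD hD0).le
  rw [hA.quadratic_add R (U₀ + W) D, hcrit D hD]
  linarith

section Kriging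

variable {n : ℕ} {ψ ψhat : EuclideanSpace ℝ (Fin n) → ℝ} {ι : Type*} [Fintype ι]

lemma kriging_quadratic_eq_integral (hψhat : Integrable ψhat)
    (hinv : ∀ y, (ψ y : ℂ) = (c2pin n : ℂ) * ∫ t, expI y t * (ψhat t : ℂ))
    (x : ι → EuclideanSpace ℝ (Fin n)) (A : Matrix ι ι ℝ) (hA : ∀ j k, A j k = ψ (x j - x k))
    (x₀ : EuclideanSpace ℝ (Fin n)) (R : ι → ℝ) (hR : ∀ j, R j = ψ (x₀ - x j)) (U : ι → ℝ) :
    U ⬝ᵥ (A *ᵥ U) - 2 * (U ⬝ᵥ R) + ψ 0 =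
      c2pin n * ∫ t, ‖(∑ j, (U j : ℂ) * expI (x j) t) - expI x₀ t‖ ^ 2 * ψhat t := by
  classical
  have key := integral_norm_sum_expI_sq_mul hψhat hinv (fun o : Option ι => o.elim (-1) U)
    (fun o => o.elim x₀ x)
  simp only [Fintype.sum_option, Option.elim] at key
  have hψ := even_of_inversion hinv
  have hsum : ∀ t, (∑ j, (U j : ℂ) * expI (x j) t) - expI x₀ t =
      ((-1 : ℝ) : ℂ) * expI x₀ t + ∑ j, (U j : ℂ) * expI (x j) t := fun t => by
    push_cast; ring
  simp_rw [hsum]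
  rw [key, ← toBilin'_apply', toBilin'_apply, dotProduct]
  have hsym : ∀ j, ψ (x j - x₀) = ψ (x₀ - x j) := fun j => by rw [← neg_sub, hψ]
  simp only [hA, hR, hsym, sub_self, Finset.sum_add_distrib, mul_neg_one, neg_mul,
    neg_neg, one_mul, Finset.sum_neg_distrib, mul_right_comm _ (ψ _)]
  ring

end Kriging

section Unisolvence

variable {σ ι κ : Type*} (pts : ι → σ → ℝ) {pb : κ → MvPolynomial σ ℝ}

lemma sum_mul_eval_eq_zero_of_mem_span [Fintype ι] (c : ι → ℝ)
    (hc : ∀ i, ∑ j, c j * MvPolynomial.eval (pts j) (pb i) = 0) {p : MvPolynomial σ ℝ}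
    (hp : p ∈ Submodule.span ℝ (Set.range pb)) :
    ∑ j, c j * MvPolynomial.eval (pts j) p = 0 := by
  let L : MvPolynomial σ ℝ →ₗ[ℝ] ℝ := ∑ j, c j • (MvPolynomial.aeval (pts j)).toLinearMap
  have hL : ∀ p, L p = ∑ j, c j * MvPolynomial.eval (pts j) p := fun p => by simp [L]
  rw [← hL, ← LinearMap.mem_ker]
  exact Submodule.span_le.mpr (Set.range_subset_iff.mpr fun i => by simp [hL, hc]) hp

lemma mulVec_injective_of_unisolvent [Fintype κ] {q : ℕ} (hq : 0 < q)
    (hdeg : ∀ i, (pb i).totalDegree < q) (hind : LinearIndependent ℝ pb)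
    (huni : ∀ p : MvPolynomial σ ℝ, p.totalDegree < q →
      (∀ j, MvPolynomial.eval (pts j) p = 0) → p = 0)
    (P : Matrix ι κ ℝ) (hP : ∀ j i, P j i = MvPolynomial.eval (pts j) (pb i)) :
    Function.Injective P.mulVec := by
  rw [← coe_mulVecLin, ← LinearMap.ker_eq_bot, LinearMap.ker_eq_bot']
  intro v hv
  have hdeg' : (∑ i, v i • pb i).totalDegree < q :=
    (MvPolynomial.totalDegree_finsetSum _ _).trans_lt <| (Finset.sup_lt_iff hq).mpr
      fun i _ => (MvPolynomial.totalDegree_smul_le _ _).trans_lt (hdeg i)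
  have hvanish : ∀ j, MvPolynomial.eval (pts j) (∑ i, v i • pb i) = 0 := fun j => by
    simpa [mulVec, dotProduct, hP, mul_comm] using congrFun hv j
  funext i
  exact Fintype.linearIndependent_iff.mp hind v (huni _ hdeg' hvanish) i

lemma dotProduct_mulVec_pos_of_mem_ker [Fintype ι] [Fintype κ] {q : ℕ}
    (hspan : ∀ p : MvPolynomial σ ℝ, p.totalDegree < q → p ∈ Submodule.span ℝ (Set.range pb))
    (A : Matrix ι ι ℝ) (hcpd : ∀ c : ι → ℝ, c ≠ 0 →
      (∀ p : MvPolynomial σ ℝ, p.totalDegree < q → ∑ j, c j * MvPolynomial.eval (pts j) p = 0) →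
      0 < ∑ j, ∑ k, c j * c k * A j k)
    (P : Matrix ι κ ℝ) (hP : ∀ j i, P j i = MvPolynomial.eval (pts j) (pb i))
    {W : ι → ℝ} (hW : W ∈ LinearMap.ker Pᵀ.mulVecLin) (hW0 : W ≠ 0) :
    0 < W ⬝ᵥ A *ᵥ W := by
  classical
  have hmoments : ∀ i, ∑ j, W j * MvPolynomial.eval (pts j) (pb i) = 0 := fun i => by
    simpa only [mulVecLin_apply, mulVec, dotProduct, transpose_apply, hP, mul_comm,
      Pi.zero_apply] using congrFun (LinearMap.mem_ker.mp hW) i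
  have := hcpd W hW0 fun p hp => sum_mul_eval_eq_zero_of_mem_span _ W hmoments (hspan p hp)
  rw [← toBilin'_apply', toBilin'_apply]
  refine this.trans_eq (Finset.sum_congr rfl fun j _ => Finset.sum_congr rfl fun k _ => ?_)
  ring

end Unisolvence

theorem kriging_function_representation_general
    (n M q Q : ℕ) (hq : 0 < q)
    (x : Fin M → EuclideanSpace ℝ (Fin n))
    (pb : Fin Q → MvPolynomial (Fin n) ℝ)
    (hdeg : ∀ i, (pb i).totalDegree < q)
    (hind : LinearIndependent ℝ pb)
    (hspan : ∀ p : MvPolynomial (Fin n) ℝ, p.totalDegree < q →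
      p ∈ Submodule.span ℝ (Set.range pb))
    (huni : ∀ p : MvPolynomial (Fin n) ℝ, p.totalDegree < q →
      (∀ j, MvPolynomial.eval (fun l => x j l) p = 0) → p = 0)
    (ψ : EuclideanSpace ℝ (Fin n) → ℝ)
    (ψhat : EuclideanSpace ℝ (Fin n) → ℝ)
    (hψhat_int : Integrable ψhat)
    (hinv : ∀ y : EuclideanSpace ℝ (Fin n),
      (ψ y : ℂ) = (c2pin n : ℂ) * ∫ t, expI y t * (ψhat t : ℂ))
    (hcpd : ∀ c : Fin M → ℝ, c ≠ 0 →
      (∀ p : MvPolynomial (Fin n) ℝ, p.totalDegree < q →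
        ∑ j, c j * MvPolynomial.eval (fun l => x j l) p = 0) →
      0 < ∑ j, ∑ k, c j * c k * ψ (x j - x k))
    (A : Matrix (Fin M) (Fin M) ℝ) (hA : ∀ j k, A j k = ψ (x j - x k))
    (P : Matrix (Fin M) (Fin Q) ℝ)
    (hP : ∀ j i, P j i = MvPolynomial.eval (fun l => x j l) (pb i))
    (x₀ : EuclideanSpace ℝ (Fin n))
    (R : Fin M → ℝ) (hR : ∀ j, R j = ψ (x₀ - x j))
    (S : Fin Q → ℝ) :
    ∃ κsq : ℝ,
      IsLeast {v : ℝ | ∃ U : Fin M → ℝ, Pᵀ *ᵥ U = S ∧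
        v = U ⬝ᵥ (A *ᵥ U) - 2 * (U ⬝ᵥ R) + ψ 0} κsq ∧
      IsLeast {v : ℝ | ∃ U : Fin M → ℝ, Pᵀ *ᵥ U = S ∧
        v = c2pin n * ∫ t, ‖(∑ j, (U j : ℂ) * expI (x j) t) - expI x₀ t‖ ^ 2 * ψhat t} κsq := by
  have hAsymm : A.IsSymm := IsSymm.ext fun j k => by
    rw [hA, hA, ← neg_sub, even_of_inversion hinv]
  have hsurj : Function.Surjective Pᵀ.mulVec :=
    mulVec_transpose_surjective (mulVec_injective_of_unisolvent _ hq hdeg hind huni P hP)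
  have hpos : ∀ W ∈ LinearMap.ker Pᵀ.mulVecLin, W ≠ 0 → 0 < W ⬝ᵥ A *ᵥ W :=
    fun W => dotProduct_mulVec_pos_of_mem_ker _ hspan A (by simpa only [hA] using hcpd) P hP
  obtain ⟨U, hU, hmin⟩ :=
    exists_forall_le_quadratic_of_pos_on_ker hAsymm Pᵀ.mulVecLin hpos R (hsurj S)
  have hobj := kriging_quadratic_eq_integral hψhat_int hinv x A hA x₀ R hR
  refine ⟨_, ⟨⟨U, hU, rfl⟩, ?_⟩, ⟨U, hU, hobj U⟩, ?_⟩
  · rintro _ ⟨V, hV, rfl⟩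
    linarith [hmin V hV]
  · rintro _ ⟨V, hV, rfl⟩
    rw [← hobj]
    linarith [hmin V hV]

/-- Theorem 2.4 of the paper in the case μ = 0: the two minimization problems
defining the Kriging function κ_q(x)² — the quadratic-form one and the Fourier-integral one —
both attain their minima and have the same minimum value. -/
theorem kriging_function_representation
    (n M q Q : ℕ) (hn : 0 < n) (hM : 0 < M) (hq : 0 < q)
    (x : Fin M → EuclideanSpace ℝ (Fin n))
    (hx : Function.Injective x)
    (pb : Fin Q → MvPolynomial (Fin n) ℝ)
    (hdeg : ∀ i, (pb i).totalDegree < q)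
    (hind : LinearIndependent ℝ pb)
    (hspan : ∀ p : MvPolynomial (Fin n) ℝ, p.totalDegree < q →
      p ∈ Submodule.span ℝ (Set.range pb))
    (huni : ∀ p : MvPolynomial (Fin n) ℝ, p.totalDegree < q →
      (∀ j, MvPolynomial.eval (fun l => x j l) p = 0) → p = 0)
    (ψ : EuclideanSpace ℝ (Fin n) → ℝ) (hψcont : Continuous ψ)
    (ψhat : EuclideanSpace ℝ (Fin n) → ℝ)
    (hψhat_nonneg : ∀ t, 0 ≤ ψhat t)
    (hψhat_int : Integrable ψhat)
    (hinv : ∀ y : EuclideanSpace ℝ (Fin n),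
      (ψ y : ℂ) = (c2pin n : ℂ) * ∫ t, expI y t * (ψhat t : ℂ))
    (hcpd : ∀ c : Fin M → ℝ, c ≠ 0 →
      (∀ p : MvPolynomial (Fin n) ℝ, p.totalDegree < q →
        ∑ j, c j * MvPolynomial.eval (fun l => x j l) p = 0) →
      0 < ∑ j, ∑ k, c j * c k * ψ (x j - x k))
    (A : Matrix (Fin M) (Fin M) ℝ) (hA : ∀ j k, A j k = ψ (x j - x k))
    (P : Matrix (Fin M) (Fin Q) ℝ)
    (hP : ∀ j i, P j i = MvPolynomial.eval (fun l => x j l) (pb i))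
    (x₀ : EuclideanSpace ℝ (Fin n))
    (R : Fin M → ℝ) (hR : ∀ j, R j = ψ (x₀ - x j))
    (S : Fin Q → ℝ) (hS : ∀ i, S i = MvPolynomial.eval (fun l => x₀ l) (pb i)) :
    ∃ κsq : ℝ,
      IsLeast {v : ℝ | ∃ U : Fin M → ℝ, Pᵀ *ᵥ U = S ∧
        v = U ⬝ᵥ (A *ᵥ U) - 2 * (U ⬝ᵥ R) + ψ 0} κsq ∧
      IsLeast {v : ℝ | ∃ U : Fin M → ℝ, Pᵀ *ᵥ U = S ∧
        v = c2pin n * ∫ t, ‖(∑ j, (U j : ℂ) * expI (x j) t) - expI x₀ t‖ ^ 2 * ψhat t} κsq :=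
  kriging_function_representation_general n M q Q hq x pb hdeg hind hspan huni ψ ψhat hψhat_int hinv
    hcpd A hA P hP x₀ R hR S
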